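/- Let n be a positive integer and let p = 4n + 1 be prime. Then there exist positive integers h and k such that p divides h^{2n} + k^{2n} but p does not divide h^{2n} - k^{2n}. -/
import Mathlib


theorem exists_powers_sum_divisible (n : ℕ) (hn : 0 < n) (p : ℕ) (hp : p.Prime)
    (hpn : p = 4 * n + 1) :
    ∃ h k : ℕ, 0 < h ∧ 0 < k ∧ (p : ℤ) ∣ (h : ℤ) ^ (2 * n) + (k : ℤ) ^ (2 * n) ∧
      ¬ (p : ℤ) ∣ (h : ℤ) ^ (2 * n) - (k : ℤ) ^ (2 * n) := by
  haveI : Fact p.Prime := ⟨hp⟩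
  have hp2 : p ≠ 2 := by omega
  have hchar : ringChar (ZMod p) ≠ 2 := by
    rw [ZMod.ringChar_zmod_n]; exact hp2
  obtain ⟨b, hb⟩ := FiniteField.exists_nonsquare hchar
  have hb0 : b ≠ 0 := by rintro rfl; exact hb ⟨0, by ring⟩
  have hpow : b ^ (p / 2) = -1 := by
    rcases ZMod.pow_div_two_eq_neg_one_or_one p hb0 with h | h
    · exact absurd ((ZMod.euler_criterion p hb0).mpr h) hb
    · exact h
  have hdiv : p / 2 = 2 * n := by omega
  refine ⟨b.val, 1, ?_, one_pos, ?_, ?_⟩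
  · exact Nat.pos_of_ne_zero fun h => hb0 (by haveI : NeZero p := ⟨hp.ne_zero⟩; exact (ZMod.val_eq_zero b).mp h)
  · rw [← ZMod.intCast_zmod_eq_zero_iff_dvd]
    push_cast
    rw [ZMod.natCast_val, ZMod.cast_id, ← hdiv, hpow]
    ring
  · rw [← ZMod.intCast_zmod_eq_zero_iff_dvd]
    push_cast
    rw [ZMod.natCast_val, ZMod.cast_id, ← hdiv, hpow]
    intro h
    have : ((2 : ℕ) : ZMod p) = 0 := by push_cast; linear_combination -h
    rw [ZMod.natCast_eq_zero_iff] at this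
    have := Nat.le_of_dvd (by norm_num) this
    omega
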